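/- Every balanced separated partition (S₁, S₂) of a finite planar point set S in general position admits a zig-zag path: a plane spanning path of S on which the points of S₁ and S₂ alternate. -/

import Mathlib

/-- Points in the plane. -/
abbrev Pt := ℝ × ℝ

/-- No three distinct points of `S` are collinear. -/
def GenPos (S : Set Pt) : Prop :=
  ∀ a ∈ S, ∀ b ∈ S, ∀ c ∈ S, a ≠ b → a ≠ c → b ≠ c →
    ¬ Collinear ℝ ({a, b, c} : Set Pt)

/-- A point `p` outside the hull sees `q ∈ S` if the segment `pq` meets
the convex hull of `S` exactly in `{q}`. -/
def Sees (p q : Pt) (S : Set Pt) : Prop :=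
  segment ℝ p q ∩ convexHull ℝ S = {q}

/-- The set of points of `S` seen from `p`. -/
def SeenSet (p : Pt) (S : Set Pt) : Set Pt := {q ∈ S | Sees p q S}

/-- `x` is an extreme point of `S`. -/
def ExtremePt (S : Set Pt) (x : Pt) : Prop := x ∈ S ∧ x ∉ convexHull ℝ (S \ {x})

/-- `ab` is an edge of the boundary of the convex hull of `S`. -/
def HullEdge (S : Set Pt) (a b : Pt) : Prop :=
  a ∈ S ∧ b ∈ S ∧ a ≠ b ∧ segment ℝ a b ⊆ frontier (convexHull ℝ S)

/-- A list enumerating the extreme points of `S` in cyclic convex-position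
order along the boundary of the convex hull. -/
def HullCycle (S : Set Pt) (l : List Pt) : Prop :=
  l.Nodup ∧ {x | x ∈ l} = {x | ExtremePt S x} ∧
    ∀ i < l.length, HullEdge S l[i]! l[(i + 1) % l.length]!

/-- A contiguous arc along the boundary of the hull of `S`
beginning in `a` and ending in `c`. -/
def Arc (S : Set Pt) (a c : Pt) (A : List Pt) : Prop :=
  ∃ l, HullCycle S l ∧ ∃ k ≤ l.length,
    A = l.take k ∧ A.head? = some a ∧ A.getLast? = some c

/-- The (undirected) edges of the path given by the list `l`. -/
def edgeSet (l : List Pt) : Set (Set Pt) :=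
  {e | ∃ p ∈ l.zip l.tail, e = ({p.1, p.2} : Set Pt)}

/-- The straight-line drawing of the path `l` is crossing-free: two edges meet
only in common endpoints. -/
def PlaneList (l : List Pt) : Prop :=
  ∀ i j : ℕ, i < j → j + 1 < l.length →
    segment ℝ l[i]! l[i + 1]! ∩ segment ℝ l[j]! l[j + 1]! ⊆
      ({l[i]!, l[i + 1]!} ∩ {l[j]!, l[j + 1]!} : Set Pt)

/-- `l` visits every point of `S` exactly once. -/
def IsSpanningPath (S : Set Pt) (l : List Pt) : Prop :=
  l.Nodup ∧ {x | x ∈ l} = S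

/-- A crossing-free straight-line spanning path of `S`. -/
def PlaneSpanningPath (S : Set Pt) (l : List Pt) : Prop :=
  IsSpanningPath S l ∧ PlaneList l

/-- Two paths are edge-disjoint if no segment is an edge of both. -/
def EdgeDisjoint (P Q : List Pt) : Prop := ∀ e ∈ edgeSet P, e ∉ edgeSet Q

/-- `S` admits three pairwise edge-disjoint plane spanning paths. -/
def ThreePaths (S : Set Pt) : Prop :=
  ∃ P Q R : List Pt,
    PlaneSpanningPath S P ∧ PlaneSpanningPath S Q ∧ PlaneSpanningPath S R ∧
    EdgeDisjoint P Q ∧ EdgeDisjoint P R ∧ EdgeDisjoint Q R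

/-- `(S₁, S₂)` is a balanced separated partition of `S`. -/
def BSP (S S₁ S₂ : Finset Pt) : Prop :=
  S₁ ∪ S₂ = S ∧ Disjoint S₁ S₂ ∧
  (S₁.card : ℤ) - S₂.card ≤ 1 ∧ (S₂.card : ℤ) - S₁.card ≤ 1 ∧
  Disjoint (convexHull ℝ (S₁ : Set Pt)) (convexHull ℝ (S₂ : Set Pt))

/-- `ab` is an edge of the visibility graph `V(S₁,S₂)`. -/
def VisEdge (S₁ S₂ : Finset Pt) (a b : Pt) : Prop :=
  a ∈ S₁ ∧ b ∈ S₂ ∧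
  segment ℝ a b ∩ (convexHull ℝ (S₁ : Set Pt) ∪ convexHull ℝ (S₂ : Set Pt))
    = ({a, b} : Set Pt)

/-- Two segments cross: their open segments share a point. -/
def SegCross (a b c d : Pt) : Prop :=
  (openSegment ℝ a b ∩ openSegment ℝ c d).Nonempty

/-- Consecutive vertices of `l` alternate between `S₁` and `S₂`. -/
def Alternating (S₁ S₂ : Finset Pt) (l : List Pt) : Prop :=
  ∀ i, i + 1 < l.length →
    (l[i]! ∈ S₁ ∧ l[i + 1]! ∈ S₂) ∨ (l[i]! ∈ S₂ ∧ l[i + 1]! ∈ S₁)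

/-- A zig-zag path for the balanced separated partition `(S₁,S₂)` of `S`. -/
def ZigZag (S S₁ S₂ : Finset Pt) (l : List Pt) : Prop :=
  PlaneSpanningPath (S : Set Pt) l ∧ Alternating S₁ S₂ l

/-- Twice the signed area of the triangle `a b c`; positive iff `c` lies to the
left of the directed line `ab`. -/
def ccw (a b c : Pt) : ℝ :=
  (b.1 - a.1) * (c.2 - a.2) - (b.2 - a.2) * (c.1 - a.1)

/-- `uv` is a halving segment of `S`: the line through `u` and `v` has exactly
`(|S| - 2)/2` points of `S` strictly on each side. -/
def Halving (S : Finset Pt) (u v : Pt) : Prop :=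
  u ∈ S ∧ v ∈ S ∧ u ≠ v ∧
  2 * ((S : Set Pt) ∩ {s | 0 < ccw u v s}).ncard = S.card - 2 ∧
  2 * ((S : Set Pt) ∩ {s | ccw u v s < 0}).ncard = S.card - 2

/-- The wheel configuration: all points but one in convex position, and one
interior point `y` such that every line through `y` and another point of the
configuration halves the remaining points. -/
def IsWheel (S : Finset Pt) : Prop :=
  ∃ y ∈ S,
    (∀ x ∈ S.erase y, x ∉ convexHull ℝ (((S.erase y : Finset Pt) : Set Pt) \ {x})) ∧
    y ∈ interior (convexHull ℝ ((S.erase y : Finset Pt) : Set Pt)) ∧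
    ∀ x ∈ S.erase y, Halving S y x

/-- `v` is a switchable path for the balanced separated partition `(S₁,S₂)` of
`S`: its edges are visibility edges, they cross a separating line of the
partition in order along the line, and every open triangle spanned by three
consecutive vertices contains no point of `S`. -/
def Switchable (S S₁ S₂ : Finset Pt) (v : List Pt) : Prop :=
  2 ≤ v.length ∧
  (∀ i, i + 1 < v.length →
    VisEdge S₁ S₂ v[i]! v[i + 1]! ∨ VisEdge S₁ S₂ v[i + 1]! v[i]!) ∧
  (∃ (f : Pt →ₗ[ℝ] ℝ) (c : ℝ),
    (∀ x ∈ S₁, f x < c) ∧ (∀ x ∈ S₂, c < f x) ∧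
    ∃ x : ℕ → Pt,
      (∀ i, i + 1 < v.length → x i ∈ segment ℝ v[i]! v[i + 1]! ∧ f (x i) = c) ∧
      ∃ g : Pt →ₗ[ℝ] ℝ, ∀ i j, i < j → j + 1 < v.length → g (x i) < g (x j)) ∧
  ∀ i, i + 2 < v.length →
    ∀ s ∈ S, s ∉ interior (convexHull ℝ ({v[i]!, v[i + 1]!, v[i + 2]!} : Set Pt))

/-- `u` is a bridged vertex of the partition `(S₁,S₂)` of `S`: an endpoint of an
edge of the boundary of `conv S` with one endpoint in each class. -/
def Bridged (S S₁ S₂ : Finset Pt) (u : Pt) : Prop :=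
  ∃ w, HullEdge (S : Set Pt) u w ∧
    ((u ∈ S₁ ∧ w ∈ S₂) ∨ (u ∈ S₂ ∧ w ∈ S₁))

/-- `u` is incident with at least two edges of the visibility graph. -/
def IncidentVisEdges2 (S₁ S₂ : Finset Pt) (u : Pt) : Prop :=
  ∃ w₁ w₂, w₁ ≠ w₂ ∧
    (VisEdge S₁ S₂ u w₁ ∨ VisEdge S₁ S₂ w₁ u) ∧
    (VisEdge S₁ S₂ u w₂ ∨ VisEdge S₁ S₂ w₂ u)

/-!
Separate `S₁` from `S₂` by a line `ℓ`. Among all segments `pq` with `p ∈ S₁` and `q ∈ S₂` take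
the one crossing `ℓ` highest; every point then lies weakly below the line `pq`. Start the path at
the endpoint `w` of this top segment in the larger class (either one if the classes are equal)
and continue with a path on the remaining points that starts at the endpoint of their top
segment `rs` in the other class. That path lies weakly below the line `rs` and starts on it,
while `w` lies strictly above it: otherwise all points, hence the crossing of `pq` with `ℓ`,
would lie weakly below `rs`, and `pq` would cross `ℓ` lower than `rs`. So the new edge meets
the rest of the path only in its endpoint.
-/

lemma ccw_self_left (r s : Pt) : ccw r s r = 0 := by
  simp only [ccw]; ring

lemma ccw_self_right (r s : Pt) : ccw r s s = 0 := by
  simp only [ccw]; ring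

lemma ccw_smul_add_smul (r s x y : Pt) {a b : ℝ} (hab : a + b = 1) :
    ccw r s (a • x + b • y) = a * ccw r s x + b * ccw r s y := by
  obtain rfl : b = 1 - a := by linarith
  simp only [ccw, Prod.fst_add, Prod.snd_add, Prod.smul_fst, Prod.smul_snd, smul_eq_mul]
  ring

lemma ccw_nonpos_of_mem_segment {r s x y z : Pt} (hx : ccw r s x ≤ 0) (hy : ccw r s y ≤ 0)
    (hz : z ∈ segment ℝ x y) : ccw r s z ≤ 0 := by
  obtain ⟨a, b, ha, hb, hab, rfl⟩ := hz
  rw [ccw_smul_add_smul r s x y hab]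
  nlinarith

lemma ccw_eq_zero_of_mem_segment {x y z : Pt} (hz : z ∈ segment ℝ x y) : ccw x y z = 0 := by
  obtain ⟨a, b, -, -, hab, rfl⟩ := hz
  rw [ccw_smul_add_smul x y x y hab, ccw_self_left, ccw_self_right]
  ring

lemma eq_of_mem_segment_of_ccw_nonpos {r s p e z : Pt} (hp : 0 < ccw r s p)
    (he : ccw r s e = 0) (hz : z ∈ segment ℝ p e) (hz' : ccw r s z ≤ 0) : z = e := by
  obtain ⟨a, b, ha, hb, hab, rfl⟩ := hz
  rw [ccw_smul_add_smul r s p e hab, he] at hz'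
  obtain rfl : a = 0 := by nlinarith
  obtain rfl : b = 1 := by linarith
  simp

lemma collinear_of_ccw_eq_zero {a b c : Pt} (h : ccw a b c = 0) :
    Collinear ℝ ({a, b, c} : Set Pt) := by
  rcases eq_or_ne a b with rfl | hab
  · simpa using collinear_pair ℝ a c
  have hd : 0 < (b.1 - a.1) ^ 2 + (b.2 - a.2) ^ 2 := by
    by_contra! hd
    exact hab (Prod.ext (by nlinarith) (by nlinarith))
  -- the parameter of the orthogonal projection of `c` onto the line `ab`
  set t := ((b.1 - a.1) * (c.1 - a.1) + (b.2 - a.2) * (c.2 - a.2)) /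
    ((b.1 - a.1) ^ 2 + (b.2 - a.2) ^ 2)
  have hc : AffineMap.lineMap a b t = c := by
    simp only [ccw] at h
    ext <;> simp only [AffineMap.lineMap_apply_module', Prod.fst_add, Prod.snd_add,
      Prod.smul_fst, Prod.smul_snd, Prod.fst_sub, Prod.snd_sub, smul_eq_mul, t] <;>
      field_simp
    · linear_combination (b.2 - a.2) * h
    · linear_combination (a.1 - b.1) * h
  have : ({a, b, c} : Set Pt) = {c, a, b} := by
    ext; simp only [Set.mem_insert_iff, Set.mem_singleton_iff]; tauto
  rw [this, ← hc]
  exact collinear_insert_of_mem_affineSpan_pair (AffineMap.lineMap_mem_affineSpan_pair t a b)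

lemma GenPos.mono {S T : Set Pt} (h : GenPos T) (hST : S ⊆ T) : GenPos S :=
  fun a ha b hb c hc => h a (hST ha) b (hST hb) c (hST hc)

lemma GenPos.ccw_ne_zero {S : Set Pt} (h : GenPos S) {a b c : Pt} (ha : a ∈ S) (hb : b ∈ S)
    (hc : c ∈ S) (hab : a ≠ b) (hac : a ≠ c) (hbc : b ≠ c) : ccw a b c ≠ 0 :=
  fun h0 => h a ha b hb c hc hab hac hbc (collinear_of_ccw_eq_zero h0)

lemma planeList_of_length_le_two {l : List Pt} (h : l.length ≤ 2) : PlaneList l :=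
  fun _ _ _ _ => by omega

lemma List.getElem!_mem {α : Type*} [Inhabited α] {l : List α} {i : ℕ} (hi : i < l.length) :
    l[i]! ∈ l := by
  rw [getElem!_pos l i hi]; exact getElem_mem hi

lemma PlaneList.cons {r s w h : Pt} {t : List Pt} (hl : PlaneList (h :: t))
    (hnd : (h :: t).Nodup) (hgp : ∀ a ∈ t, ∀ b ∈ t, a ≠ b → ccw a b h ≠ 0)
    (hright : ∀ x ∈ h :: t, ccw r s x ≤ 0) (hh : ccw r s h = 0) (hw : 0 < ccw r s w) :
    PlaneList (w :: h :: t) := by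
  rintro (_ | i) (_ | j) hij hj
  · omega
  · simp only [List.length_cons] at hj
    simp only [List.getElem!_cons_succ, List.getElem!_cons_zero, zero_add]
    rintro z ⟨hzw, hzj⟩
    have hjl : j < (h :: t).length := by simp only [List.length_cons]; omega
    have hj1l : j + 1 < (h :: t).length := by simp only [List.length_cons]; omega
    obtain rfl : z = h := eq_of_mem_segment_of_ccw_nonpos hw hh hzw
      (ccw_nonpos_of_mem_segment (hright _ (List.getElem!_mem hjl))
        (hright _ (List.getElem!_mem hj1l)) hzj)
    rcases j with _ | j
    · simp
    · exfalso
      simp only [List.getElem!_cons_succ] at hzj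
      have hjt : j < t.length := by simp only [List.length_cons] at hj1l; omega
      have hj1t : j + 1 < t.length := by simp only [List.length_cons] at hj1l; omega
      refine hgp _ (List.getElem!_mem hjt) _ (List.getElem!_mem hj1t) ?_
        (ccw_eq_zero_of_mem_segment hzj)
      rw [getElem!_pos t j hjt, getElem!_pos t (j + 1) hj1t]
      exact fun he => by
        simpa using (List.Nodup.getElem_inj_iff (List.nodup_cons.mp hnd).2).mp he
  · omega
  · simpa using hl i j (by omega) (by simpa using hj)

lemma Alternating.cons {S₁ S₂ : Finset Pt} {w h : Pt} {t : List Pt}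
    (hl : Alternating S₁ S₂ (h :: t)) (hwh : (w ∈ S₁ ∧ h ∈ S₂) ∨ (w ∈ S₂ ∧ h ∈ S₁)) :
    Alternating S₁ S₂ (w :: h :: t) := by
  rintro (_ | i) hi
  · simpa using hwh
  · simpa using hl i (by simpa using hi)

lemma Alternating.mono {S₁ S₂ T₁ T₂ : Finset Pt} {l : List Pt} (hl : Alternating S₁ S₂ l)
    (h₁ : S₁ ⊆ T₁) (h₂ : S₂ ⊆ T₂) : Alternating T₁ T₂ l := fun i hi =>
  (hl i hi).imp (fun h => ⟨h₁ h.1, h₂ h.2⟩) (fun h => ⟨h₂ h.1, h₁ h.2⟩)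

lemma zigzag_of_card_le_one {S S₁ S₂ : Finset Pt} (h : S.card ≤ 1) : ∃ l, ZigZag S S₁ S₂ l := by
  obtain ⟨x, hx⟩ := Finset.card_le_one_iff_subset_singleton.mp h
  rcases Finset.subset_singleton_iff.mp hx with rfl | rfl
  · exact ⟨[], ⟨⟨List.nodup_nil, by simp⟩, planeList_of_length_le_two (by simp)⟩,
      fun i hi => by simp at hi⟩
  · exact ⟨[x], ⟨⟨List.nodup_singleton x, by simp⟩, planeList_of_length_le_two (by simp)⟩,
      fun i hi => by simp at hi⟩

lemma zigzag_pair {S₁ S₂ : Finset Pt} {p q : Pt} (hpq : p ≠ q)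
    (hal : (p ∈ S₁ ∧ q ∈ S₂) ∨ (p ∈ S₂ ∧ q ∈ S₁)) : ZigZag {p, q} S₁ S₂ [p, q] :=
  ⟨⟨⟨by simpa using hpq, by ext; simp⟩, planeList_of_length_le_two (by simp)⟩,
    fun i hi => by
      obtain rfl : i = 0 := by simp only [List.length_cons, List.length_nil] at hi; omega
      simpa using hal⟩

section TopPair

variable (u v c : ℝ)

def sepX (p : Pt) : ℝ := u * p.1 + v * p.2 - c

def sepY (p : Pt) : ℝ := u * p.2 - v * p.1

/-- The `sepY`-coordinate of the point where the line `pq` crosses the line `sepX = 0`. -/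
noncomputable def crossHeight (p q : Pt) : ℝ :=
  (sepY u v p * sepX u v c q - sepX u v c p * sepY u v q) / (sepX u v c q - sepX u v c p)

def IsTopPair (A B : Finset Pt) (p q : Pt) : Prop :=
  p ∈ A ∧ q ∈ B ∧ ∀ p' ∈ A, ∀ q' ∈ B, crossHeight u v c p' q' ≤ crossHeight u v c p q

variable {u v c}

lemma exists_isTopPair {A B : Finset Pt} (hA : A.Nonempty) (hB : B.Nonempty) :
    ∃ p q, IsTopPair u v c A B p q := by
  obtain ⟨⟨p, q⟩, hpq, hmax⟩ :=
    (A ×ˢ B).exists_max_image (fun x => crossHeight u v c x.1 x.2) (hA.product hB)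
  rw [Finset.mem_product] at hpq
  exact ⟨p, q, hpq.1, hpq.2, fun p' hp' q' hq' => hmax (p', q') (Finset.mem_product.mpr ⟨hp', hq'⟩)⟩

/-- `sepX q • p - sepX p • q` is `sepX q - sepX p` times the point where `pq` crosses the
line `sepX = 0`. -/
lemma crossHeight_sub {p q r s : Pt} (hpq : sepX u v c p ≠ sepX u v c q)
    (hrs : sepX u v c r ≠ sepX u v c s) :
    crossHeight u v c p q - crossHeight u v c r s =
      (u ^ 2 + v ^ 2) * (sepX u v c q * ccw r s p - sepX u v c p * ccw r s q) /
        ((sepX u v c q - sepX u v c p) * (sepX u v c s - sepX u v c r)) := by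
  have hpq' : sepX u v c q - sepX u v c p ≠ 0 := sub_ne_zero.mpr hpq.symm
  have hrs' : sepX u v c s - sepX u v c r ≠ 0 := sub_ne_zero.mpr hrs.symm
  rw [crossHeight, crossHeight, div_sub_div _ _ hpq' hrs']
  congr 1
  simp only [sepX, sepY, ccw]
  ring

lemma sq_add_sq_pos_of_sepX_ne {p q : Pt} (h : sepX u v c p ≠ sepX u v c q) :
    0 < u ^ 2 + v ^ 2 := by
  by_contra! huv
  obtain rfl : u = 0 := by nlinarith
  obtain rfl : v = 0 := by nlinarith
  simp [sepX] at h

lemma crossHeight_le_crossHeight_iff {p q r s : Pt} (hp : sepX u v c p < 0)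
    (hq : 0 < sepX u v c q) (hr : sepX u v c r < 0) (hs : 0 < sepX u v c s) :
    crossHeight u v c p q ≤ crossHeight u v c r s ↔
      sepX u v c q * ccw r s p - sepX u v c p * ccw r s q ≤ 0 := by
  have hk := sq_add_sq_pos_of_sepX_ne (hp.trans hq).ne
  have hd : 0 < (sepX u v c q - sepX u v c p) * (sepX u v c s - sepX u v c r) := by
    apply mul_pos <;> linarith
  rw [← sub_nonpos, crossHeight_sub (hp.trans hq).ne (hr.trans hs).ne,
    div_le_iff₀ hd, zero_mul]
  constructor <;> intro h <;> nlinarith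

lemma crossHeight_lt_crossHeight_iff {p q r s : Pt} (hp : sepX u v c p < 0)
    (hq : 0 < sepX u v c q) (hr : sepX u v c r < 0) (hs : 0 < sepX u v c s) :
    crossHeight u v c p q < crossHeight u v c r s ↔
      sepX u v c q * ccw r s p - sepX u v c p * ccw r s q < 0 := by
  have hk := sq_add_sq_pos_of_sepX_ne (hp.trans hq).ne
  have hd : 0 < (sepX u v c q - sepX u v c p) * (sepX u v c s - sepX u v c r) := by
    apply mul_pos <;> linarith
  rw [← sub_neg, crossHeight_sub (hp.trans hq).ne (hr.trans hs).ne,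
    div_lt_iff₀ hd, zero_mul]
  constructor <;> intro h <;> nlinarith

variable {A B : Finset Pt} {p q : Pt}

lemma IsTopPair.ccw_nonpos (hA : ∀ x ∈ A, sepX u v c x < 0) (hB : ∀ x ∈ B, 0 < sepX u v c x)
    (hpq : IsTopPair u v c A B p q) {t : Pt} (ht : t ∈ A ∪ B) : ccw p q t ≤ 0 := by
  obtain ⟨hp, hq, hmax⟩ := hpq
  rcases Finset.mem_union.mp ht with ht | ht
  · have h := (crossHeight_le_crossHeight_iff (hA t ht) (hB q hq) (hA p hp) (hB q hq)).mp
      (hmax t ht q hq)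
    rw [ccw_self_right, mul_zero, sub_zero] at h
    exact nonpos_of_mul_nonpos_right h (hB q hq)
  · have h := (crossHeight_le_crossHeight_iff (hA p hp) (hB t ht) (hA p hp) (hB q hq)).mp
      (hmax p hp t ht)
    rw [ccw_self_left, mul_zero, zero_sub, neg_nonpos] at h
    nlinarith [hA p hp]

lemma IsTopPair.ccw_pos_of_erase (hA : ∀ x ∈ A, sepX u v c x < 0)
    (hB : ∀ x ∈ B, 0 < sepX u v c x) (hgp : GenPos ↑(A ∪ B)) (hpq : IsTopPair u v c A B p q)
    {w r s : Pt} (hw : w = p ∨ w = q) (hrs : IsTopPair u v c (A.erase w) (B.erase w) r s) :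
    0 < ccw r s w := by
  have hwAB : w ∈ A ∪ B := by
    rcases hw with rfl | rfl
    exacts [Finset.mem_union_left _ hpq.1, Finset.mem_union_right _ hpq.2.1]
  have hr := hrs.1
  have hs := hrs.2.1
  have hrA := Finset.mem_of_mem_erase hr
  have hsB := Finset.mem_of_mem_erase hs
  have hrs_ne : r ≠ s := fun h => (hA r hrA).not_gt (h ▸ hB s hsB)
  have hne : ccw r s w ≠ 0 := hgp.ccw_ne_zero (by simp [hrA]) (by simp [hsB])
    (by simpa using hwAB) hrs_ne (Finset.ne_of_mem_erase hr) (Finset.ne_of_mem_erase hs)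
  by_contra! hle
  have hright : ∀ t ∈ A ∪ B, ccw r s t ≤ 0 := by
    intro t ht
    by_cases htw : t = w
    · exact htw ▸ hle
    · refine hrs.ccw_nonpos (fun x hx => hA x (Finset.mem_of_mem_erase hx))
        (fun x hx => hB x (Finset.mem_of_mem_erase hx)) ?_
      rcases Finset.mem_union.mp ht with ht | ht
      exacts [Finset.mem_union_left _ (Finset.mem_erase.mpr ⟨htw, ht⟩),
        Finset.mem_union_right _ (Finset.mem_erase.mpr ⟨htw, ht⟩)]
  have hp := hpq.1
  have hq := hpq.2.1
  have hlt : crossHeight u v c p q < crossHeight u v c r s := by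
    rw [crossHeight_lt_crossHeight_iff (hA p hp) (hB q hq) (hA r hrA) (hB s hsB)]
    have hcp := hright p (Finset.mem_union_left _ hp)
    have hcq := hright q (Finset.mem_union_right _ hq)
    have := hA p hp
    have := hB q hq
    rcases hw with rfl | rfl <;> nlinarith [lt_of_le_of_ne hle hne]
  exact hlt.not_ge (hpq.2.2 r hrA s hsB)

lemma ZigZag.cons_of_isTopPair (hA : ∀ x ∈ A, sepX u v c x < 0)
    (hB : ∀ x ∈ B, 0 < sepX u v c x) (hgp : GenPos ↑(A ∪ B)) (hpq : IsTopPair u v c A B p q)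
    {w r s h : Pt} {t : List Pt} (hw : w = p ∨ w = q)
    (hrs : IsTopPair u v c (A.erase w) (B.erase w) r s) (hh : h = r ∨ h = s)
    (hl : ZigZag (A.erase w ∪ B.erase w) (A.erase w) (B.erase w) (h :: t))
    (hwh : (w ∈ A ∧ h ∈ B) ∨ (w ∈ B ∧ h ∈ A)) :
    ZigZag (A ∪ B) A B (w :: h :: t) := by
  obtain ⟨⟨⟨hnd, hspan⟩, hpl⟩, halt⟩ := hl
  have hmem : ∀ x, x ∈ h :: t ↔ x ∈ (A ∪ B).erase w := fun x => by
    rw [Finset.erase_union_distrib]; exact Set.ext_iff.mp hspan x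
  have hwAB : w ∈ A ∪ B := by rcases hwh with h | h <;> simp [h.1]
  have hht : h ∉ t := (List.nodup_cons.mp hnd).1
  have hAB : ∀ x ∈ h :: t, x ∈ A ∪ B := fun x hx => Finset.mem_of_mem_erase ((hmem x).mp hx)
  refine ⟨⟨⟨List.nodup_cons.mpr ⟨fun hw' => by simpa using (hmem w).mp hw', hnd⟩, ?_⟩, ?_⟩,
    (halt.mono (Finset.erase_subset w A) (Finset.erase_subset w B)).cons hwh⟩
  · ext x
    by_cases hxw : x = w
    · simpa [hxw] using hwAB
    · simpa [hxw] using hmem x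
  · refine hpl.cons hnd (fun a ha b hb hab => hgp.ccw_ne_zero (hAB a (by simp [ha]))
      (hAB b (by simp [hb])) (hAB h (by simp)) hab (ne_of_mem_of_not_mem ha hht)
      (ne_of_mem_of_not_mem hb hht)) (fun x hx => ?_) ?_
      (hpq.ccw_pos_of_erase hA hB hgp hw hrs)
    · refine hrs.ccw_nonpos (fun y hy => hA y (Finset.mem_of_mem_erase hy))
        (fun y hy => hB y (Finset.mem_of_mem_erase hy)) ?_
      rw [← Finset.erase_union_distrib]
      exact (hmem x).mp hx
    · rcases hh with rfl | rfl
      exacts [ccw_self_left _ _, ccw_self_right _ _]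

end TopPair

theorem exists_zigzag_cons_of_isTopPair {u v c : ℝ} {A B : Finset Pt} {p q : Pt}
    (hA : ∀ x ∈ A, sepX u v c x < 0) (hB : ∀ x ∈ B, 0 < sepX u v c x) (hgp : GenPos ↑(A ∪ B))
    (hpq : IsTopPair u v c A B p q) :
    (B.card ≤ A.card → A.card ≤ B.card + 1 → ∃ t, ZigZag (A ∪ B) A B (p :: t)) ∧
      (A.card ≤ B.card → B.card ≤ A.card + 1 → ∃ t, ZigZag (A ∪ B) A B (q :: t)) := by
  have hp := hpq.1
  have hq := hpq.2.1
  have hpB : p ∉ B := fun h => (hA p hp).not_gt (hB p h)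
  have hqA : q ∉ A := fun h => (hA q h).not_gt (hB q hq)
  have hpq_ne : p ≠ q := ne_of_mem_of_not_mem hp hqA
  have hA' (w : Pt) : ∀ x ∈ A.erase w, sepX u v c x < 0 :=
    fun x hx => hA x (Finset.mem_of_mem_erase hx)
  have hB' (w : Pt) : ∀ x ∈ B.erase w, 0 < sepX u v c x :=
    fun x hx => hB x (Finset.mem_of_mem_erase hx)
  have hgp' (w : Pt) : GenPos ↑(A.erase w ∪ B.erase w) :=
    hgp.mono (by gcongr <;> exact Finset.erase_subset w _)
  refine ⟨fun h₁ h₂ => ?_, fun h₁ h₂ => ?_⟩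
  · rcases (A.erase p).eq_empty_or_nonempty with hAp | hAp
    · obtain rfl : A = {p} := ((Finset.erase_eq_empty_iff A p).mp hAp).resolve_left
        (Finset.ne_empty_of_mem hp)
      obtain rfl : B = {q} := Finset.eq_singleton_iff_unique_mem.mpr
        ⟨hq, fun x hx => Finset.card_le_one.mp (by simpa using h₁) x hx q hq⟩
      exact ⟨[q], Finset.insert_eq p {q} ▸ zigzag_pair hpq_ne (by simp)⟩
    have hBp : B.erase p = B := Finset.erase_eq_of_notMem hpB
    obtain ⟨r, s, hrs⟩ := exists_isTopPair (u := u) (v := v) (c := c) hAp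
      ⟨q, Finset.mem_erase.mpr ⟨hpq_ne.symm, hq⟩⟩
    obtain ⟨t, ht⟩ := (exists_zigzag_cons_of_isTopPair (hA' p) (hB' p) (hgp' p) hrs).2
      (by rw [hBp, Finset.card_erase_of_mem hp]; omega)
      (by rw [hBp, Finset.card_erase_of_mem hp]; omega)
    exact ⟨s :: t, ht.cons_of_isTopPair hA hB hgp hpq (Or.inl rfl) hrs (Or.inr rfl)
      (Or.inl ⟨hp, Finset.mem_of_mem_erase hrs.2.1⟩)⟩
  · rcases (B.erase q).eq_empty_or_nonempty with hBq | hBq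
    · obtain rfl : B = {q} := ((Finset.erase_eq_empty_iff B q).mp hBq).resolve_left
        (Finset.ne_empty_of_mem hq)
      obtain rfl : A = {p} := Finset.eq_singleton_iff_unique_mem.mpr
        ⟨hp, fun x hx => Finset.card_le_one.mp (by simpa using h₁) x hx p hp⟩
      exact ⟨[p], Finset.union_comm {p} {q} ▸ Finset.insert_eq q {p} ▸
        zigzag_pair hpq_ne.symm (by simp)⟩
    have hAq : A.erase q = A := Finset.erase_eq_of_notMem hqA
    obtain ⟨r, s, hrs⟩ := exists_isTopPair (u := u) (v := v) (c := c)
      ⟨p, Finset.mem_erase.mpr ⟨hpq_ne, hp⟩⟩ hBq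
    obtain ⟨t, ht⟩ := (exists_zigzag_cons_of_isTopPair (hA' q) (hB' q) (hgp' q) hrs).1
      (by rw [hAq, Finset.card_erase_of_mem hq]; omega)
      (by rw [hAq, Finset.card_erase_of_mem hq]; omega)
    exact ⟨r :: t, ht.cons_of_isTopPair hA hB hgp hpq (Or.inr rfl) hrs (Or.inl rfl)
      (Or.inr ⟨hq, Finset.mem_of_mem_erase hrs.1⟩)⟩
termination_by A.card + B.card
decreasing_by
  · exact Nat.add_lt_add_of_lt_of_le (Finset.card_erase_lt_of_mem hp) Finset.card_erase_le
  · exact Nat.add_lt_add_of_le_of_lt Finset.card_erase_le (Finset.card_erase_lt_of_mem hq)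

lemma exists_sepX_of_disjoint_convexHull {S₁ S₂ : Finset Pt}
    (h : Disjoint (convexHull ℝ (S₁ : Set Pt)) (convexHull ℝ (S₂ : Set Pt))) :
    ∃ u v c : ℝ, (∀ x ∈ S₁, sepX u v c x < 0) ∧ ∀ x ∈ S₂, 0 < sepX u v c x := by
  obtain ⟨f, a, b, hfa, hab, hfb⟩ := geometric_hahn_banach_compact_closed
    (convex_convexHull ℝ _) (S₁.finite_toSet.isCompact_convexHull (𝕜 := ℝ))
    (convex_convexHull ℝ _) (S₂.finite_toSet.isCompact_convexHull (𝕜 := ℝ)).isClosed h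
  have hf (x : Pt) : f x = f (1, 0) * x.1 + f (0, 1) * x.2 := by
    conv_lhs => rw [show x = x.1 • ((1 : ℝ), (0 : ℝ)) + x.2 • ((0 : ℝ), (1 : ℝ)) by ext <;> simp]
    simp only [map_add, map_smul, smul_eq_mul]
    ring
  refine ⟨f (1, 0), f (0, 1), a, fun x hx => ?_, fun x hx => ?_⟩ <;> rw [sepX, ← hf]
  · linarith [hfa x (subset_convexHull ℝ _ hx)]
  · linarith [hfb x (subset_convexHull ℝ _ hx)]

theorem stmt_7 (S S₁ S₂ : Finset Pt) (hgp : GenPos (S : Set Pt))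
    (hbsp : BSP S S₁ S₂) :
    ∃ l : List Pt, ZigZag S S₁ S₂ l := by
  obtain ⟨rfl, -, hc₁, hc₂, hhull⟩ := hbsp
  rcases S₁.eq_empty_or_nonempty with rfl | hS₁
  · exact zigzag_of_card_le_one (by simp at hc₂ ⊢; omega)
  rcases S₂.eq_empty_or_nonempty with rfl | hS₂
  · exact zigzag_of_card_le_one (by simp at hc₁ ⊢; omega)
  obtain ⟨u, v, c, hA, hB⟩ := exists_sepX_of_disjoint_convexHull hhull
  obtain ⟨p, q, hpq⟩ := exists_isTopPair (u := u) (v := v) (c := c) hS₁ hS₂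
  have hpaths := exists_zigzag_cons_of_isTopPair hA hB hgp hpq
  rcases le_total S₂.card S₁.card with h | h
  · obtain ⟨t, ht⟩ := hpaths.1 h (by omega)
    exact ⟨_, ht⟩
  · obtain ⟨t, ht⟩ := hpaths.2 h (by omega)
    exact ⟨_, ht⟩
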